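/- Let λ, μ ∈ (0,∞) and 0 < t < T. For all u, r ∈ [0,1], the minimiser of s ↦ I_{1,t}(u,s) + I_{1,T−t}(s,r) over s ∈ [0,1] is unique; that is, there is exactly one s* ∈ [0,1] with I_{1,t}(u,s*) + I_{1,T−t}(s*,r) = I_{1,T}(u,r), and for every s ∈ [0,1] with s ≠ s* one has I_{1,t}(u,s) + I_{1,T−t}(s,r) > I_{1,T}(u,r). -/

import Mathlib

noncomputable section

open MeasureTheory Real Filter

/-- Probability that an initially inactive edge is active at time `t`. -/
def p01 (lam mu t : ℝ) : ℝ := (lam - lam * Real.exp (-(t * (lam + mu)))) / (lam + mu)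

/-- Probability that an initially active edge is active at time `t`. -/
def p11 (lam mu t : ℝ) : ℝ := (lam + mu * Real.exp (-(t * (lam + mu)))) / (lam + mu)

/-- The cumulant-type function `J_{t,v}(u)`. -/
def Jfun (lam mu t v u : ℝ) : ℝ :=
  u * Real.log (1 - p11 lam mu t + Real.exp v * p11 lam mu t) +
  (1 - u) * Real.log (1 - p01 lam mu t + Real.exp v * p01 lam mu t)

/-- The one-step rate function `I_{1,t}(u,x) = sup_v [v x - J_{t,v}(u)]`. -/
def I1 (lam mu t u x : ℝ) : ℝ := ⨆ v : ℝ, (v * x - Jfun lam mu t v u)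

/-!
Every rate function here is a Legendre transform `I(x) = ⨆ v, v * x - K v` of a mixture
`K = mixCGF u p q` of Bernoulli cumulant generating functions. Conditioning on the state at the
intermediate time, the Chapman–Kolmogorov relations `P = p P' + (1 - p) Q'` give
`mixCGF u P Q v = mixCGF u p q (w v) + bernoulliCGF Q' v` with
`w = bernoulliCGF P' - bernoulliCGF Q'`, and since `mixCGF s P' Q' v = s * w v + bernoulliCGF Q' v`,
`v r - mixCGF u P Q v = (w v * s - mixCGF u p q (w v)) + (v r - mixCGF s P' Q' v)` for every `s`.
Taking suprema gives `I_T(u, r) ≤ I_t(u, s) + I_{T-t}(s, r)`. Equality holds at the slope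
`s = K'(w v)` for `v` maximising the left-hand side; when `r ∈ {0, 1}` no maximiser exists and
`v` is sent to `∓∞` instead. The minimiser is unique because `s ↦ I_t(u, s)` is strictly
convex on `[0, 1]` (`K` is differentiable with `K'` onto `(0, 1)`) and `s ↦ I_{T-t}(s, r)` is
convex, being a supremum of affine functions of `s`.
-/

open Set Topology

def legendreTransform (K : ℝ → ℝ) (x : ℝ) : ℝ := ⨆ v, v * x - K v

section Legendre

variable {K K' : ℝ → ℝ} {k x v₀ : ℝ}

theorem legendreTransform_eq_of_hasDerivAt (hK : ∀ v, HasDerivAt K (K' v) v) (hK' : Monotone K')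
    (hv₀ : K' v₀ = x) : legendreTransform K x = v₀ * x - K v₀ := by
  have hd : ∀ v, HasDerivAt (fun v => K v - v * x) (K' v - x) v := fun v =>
    ((hK v).sub ((hasDerivAt_id' v).mul_const x)).congr_deriv (by ring)
  have hconv : ConvexOn ℝ univ (fun v => K v - v * x) := by
    refine Monotone.convexOn_univ_of_deriv (fun v => (hd v).differentiableAt) ?_
    rw [funext fun v => (hd v).deriv]
    exact fun a b hab => sub_le_sub_right (hK' hab) x
  have hmin : IsMinOn (fun v => K v - v * x) univ v₀ :=
    hconv.isMinOn_of_rightDeriv_eq_zero (by simp) <| by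
      rw [(hd v₀).hasDerivWithinAt.derivWithin (uniqueDiffWithinAt_Ioi v₀), hv₀, sub_self]
  refine ciSup_eq_of_forall_le_of_forall_lt_exists_gt (fun v => ?_) fun y hy => ⟨v₀, hy⟩
  have := hmin (mem_univ v)
  simp only [mem_ofPred_eq] at this
  linarith

theorem lt_legendreTransform_of_hasDerivAt (hK : HasDerivAt K k v₀)
    (hb : BddAbove (range fun v => v * x - K v)) (hk : k ≠ x) :
    v₀ * x - K v₀ < legendreTransform K x := by
  by_contra! hle
  have hmax : IsLocalMax (fun v => v * x - K v) v₀ :=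
    Eventually.of_forall fun v => (le_ciSup hb v).trans hle
  have := hmax.hasDerivAt_eq_zero (((hasDerivAt_id v₀).mul_const x).sub hK)
  exact hk (by linarith)

theorem strictConvexOn_legendreTransform (hK : ∀ v, HasDerivAt K (K' v) v) (hK' : Monotone K')
    (hrange : Ioo 0 1 ⊆ range K')
    (hb : ∀ x ∈ Icc (0 : ℝ) 1, BddAbove (range fun v => v * x - K v)) :
    StrictConvexOn ℝ (Icc 0 1) (legendreTransform K) := by
  refine ⟨convex_Icc 0 1, fun x hx y hy hxy a b ha hb' hab => ?_⟩
  simp only [smul_eq_mul]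
  have hm : a * x + b * y ∈ Ioo (0 : ℝ) 1 := by
    rcases hxy.lt_or_gt with h | h
    · constructor <;> nlinarith [mul_pos ha (sub_pos.2 h), mul_pos hb' (sub_pos.2 h), hx.1, hy.2]
    · constructor <;> nlinarith [mul_pos ha (sub_pos.2 h), mul_pos hb' (sub_pos.2 h), hy.1, hx.2]
  obtain ⟨v, hv⟩ := hrange hm
  have hvx : K' v ≠ x := by
    rw [hv, ← sub_ne_zero, show a * x + b * y - x = b * (y - x) by linear_combination x * hab]
    exact mul_ne_zero hb'.ne' (sub_ne_zero.2 hxy.symm)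
  have hvy : K' v ≠ y := by
    rw [hv, ← sub_ne_zero, show a * x + b * y - y = a * (x - y) by linear_combination y * hab]
    exact mul_ne_zero ha.ne' (sub_ne_zero.2 hxy)
  have hltx := lt_legendreTransform_of_hasDerivAt (hK v) (hb x hx) hvx
  have hlty := lt_legendreTransform_of_hasDerivAt (hK v) (hb y hy) hvy
  calc legendreTransform K (a * x + b * y) = a * (v * x - K v) + b * (v * y - K v) := by
        rw [legendreTransform_eq_of_hasDerivAt hK hK' hv]; linear_combination K v * hab
    _ < a * legendreTransform K x + b * legendreTransform K y := by gcongr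

theorem tendsto_atBot_legendreTransform_zero (hK : Monotone K)
    (hb : BddAbove (range fun v => v * 0 - K v)) :
    Tendsto (fun v => v * 0 - K v) atBot (𝓝 (legendreTransform K 0)) :=
  tendsto_atBot_ciSup (fun a b hab => by simpa using hK hab) hb

theorem tendsto_atTop_legendreTransform_one (hK : Monotone fun v => v - K v)
    (hb : BddAbove (range fun v => v * 1 - K v)) :
    Tendsto (fun v => v * 1 - K v) atTop (𝓝 (legendreTransform K 1)) :=
  tendsto_atTop_ciSup (by simpa using hK) hb

end Legendre

def bernoulliCGF (p v : ℝ) : ℝ := log (1 - p + exp v * p)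

def bernoulliTiltedMean (p v : ℝ) : ℝ := exp v * p / (1 - p + exp v * p)

section Bernoulli

variable {p : ℝ}

theorem one_sub_add_exp_mul_pos (hp : p ∈ Ioo (0 : ℝ) 1) (v : ℝ) : 0 < 1 - p + exp v * p := by
  have := mul_pos (exp_pos v) hp.1
  linarith [hp.2]

theorem hasDerivAt_bernoulliCGF (hp : p ∈ Ioo (0 : ℝ) 1) (v : ℝ) :
    HasDerivAt (bernoulliCGF p) (bernoulliTiltedMean p v) v := by
  have h : HasDerivAt (fun v => 1 - p + exp v * p) (exp v * p) v := by
    simpa using ((hasDerivAt_exp v).mul_const p).const_add (1 - p)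
  exact h.log (one_sub_add_exp_mul_pos hp v).ne'

theorem monotone_bernoulliCGF (hp : p ∈ Ioo (0 : ℝ) 1) : Monotone (bernoulliCGF p) :=
  fun a b hab => log_le_log (one_sub_add_exp_mul_pos hp a) <| by
    have := hp.1
    gcongr

theorem monotone_bernoulliTiltedMean (hp : p ∈ Ioo (0 : ℝ) 1) :
    Monotone (bernoulliTiltedMean p) := by
  intro a b hab
  rw [bernoulliTiltedMean, bernoulliTiltedMean,
    div_le_div_iff₀ (one_sub_add_exp_mul_pos hp a) (one_sub_add_exp_mul_pos hp b)]
  have := mul_le_mul_of_nonneg_right (exp_le_exp.2 hab) (mul_nonneg hp.1.le (sub_pos.2 hp.2).le)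
  nlinarith

theorem continuous_bernoulliTiltedMean (hp : p ∈ Ioo (0 : ℝ) 1) :
    Continuous (bernoulliTiltedMean p) :=
  (continuous_exp.mul continuous_const).div (continuous_const.add
    (continuous_exp.mul continuous_const)) fun v => (one_sub_add_exp_mul_pos hp v).ne'

/-- The symmetry `X ↦ 1 - X` of Bernoulli variables, at the level of cumulant generating
functions. -/
theorem bernoulliCGF_eq_add_bernoulliCGF_one_sub (hp : p ∈ Ioo (0 : ℝ) 1) (v : ℝ) :
    bernoulliCGF p v = v + bernoulliCGF (1 - p) (-v) := by
  have h : 1 - p + exp v * p = exp v * (1 - (1 - p) + exp (-v) * (1 - p)) := by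
    rw [exp_neg]; field_simp; ring
  rw [bernoulliCGF, bernoulliCGF, h, log_mul (exp_pos v).ne'
    (one_sub_add_exp_mul_pos (Ioo.one_sub_mem hp) (-v)).ne', log_exp]

theorem bernoulliTiltedMean_eq_one_sub (hp : p ∈ Ioo (0 : ℝ) 1) (v : ℝ) :
    bernoulliTiltedMean p v = 1 - bernoulliTiltedMean (1 - p) (-v) := by
  have h := (hasDerivAt_id' v).add
    ((hasDerivAt_bernoulliCGF (Ioo.one_sub_mem hp) (-v)).comp v (hasDerivAt_neg v))
  have hfun : bernoulliCGF p = (fun v => v) + bernoulliCGF (1 - p) ∘ Neg.neg :=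
    funext (bernoulliCGF_eq_add_bernoulliCGF_one_sub hp)
  rw [← hfun] at h
  simpa [sub_eq_add_neg] using (hasDerivAt_bernoulliCGF hp v).unique h

theorem monotone_sub_bernoulliCGF (hp : p ∈ Ioo (0 : ℝ) 1) :
    Monotone fun v => v - bernoulliCGF p v := by
  intro a b hab
  simp only [bernoulliCGF_eq_add_bernoulliCGF_one_sub hp, sub_add_cancel_left, neg_le_neg_iff]
  exact monotone_bernoulliCGF (Ioo.one_sub_mem hp) (neg_le_neg hab)

theorem tendsto_bernoulliCGF_atBot (hp : p ∈ Ioo (0 : ℝ) 1) :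
    Tendsto (bernoulliCGF p) atBot (𝓝 (log (1 - p))) := by
  have h : Tendsto (fun v => 1 - p + exp v * p) atBot (𝓝 (1 - p)) := by
    simpa using (tendsto_exp_atBot.mul_const p).const_add (1 - p)
  exact ((continuousAt_log (sub_pos.2 hp.2).ne').tendsto).comp h

theorem tendsto_bernoulliCGF_sub_atTop (hp : p ∈ Ioo (0 : ℝ) 1) :
    Tendsto (fun v => bernoulliCGF p v - v) atTop (𝓝 (log p)) := by
  have h := (tendsto_bernoulliCGF_atBot (Ioo.one_sub_mem hp)).comp tendsto_neg_atTop_atBot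
  simp only [sub_sub_cancel] at h
  refine h.congr fun v => ?_
  simp [bernoulliCGF_eq_add_bernoulliCGF_one_sub hp v]

theorem tendsto_bernoulliTiltedMean_atBot (hp : p ∈ Ioo (0 : ℝ) 1) :
    Tendsto (bernoulliTiltedMean p) atBot (𝓝 0) := by
  have h : Tendsto (fun v => exp v * p) atBot (𝓝 0) := by
    simpa using tendsto_exp_atBot.mul_const p
  have h' := h.div (by simpa using h.const_add (1 - p)) (sub_pos.2 hp.2).ne'
  rwa [zero_div] at h'

theorem tendsto_bernoulliTiltedMean_atTop (hp : p ∈ Ioo (0 : ℝ) 1) :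
    Tendsto (bernoulliTiltedMean p) atTop (𝓝 1) := by
  have h := ((tendsto_bernoulliTiltedMean_atBot (Ioo.one_sub_mem hp)).comp
    tendsto_neg_atTop_atBot).const_sub 1
  rw [sub_zero] at h
  exact h.congr fun v => (bernoulliTiltedMean_eq_one_sub hp v).symm

theorem mul_sub_bernoulliCGF_le (hp : p ∈ Ioo (0 : ℝ) 1) {x : ℝ} (hx : x ∈ Icc (0 : ℝ) 1)
    (v : ℝ) : v * x - bernoulliCGF p v ≤ -(x * log p + (1 - x) * log (1 - p)) := by
  have h0 := (monotone_bernoulliCGF hp).le_of_tendsto (tendsto_bernoulliCGF_atBot hp) v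
  have h1 := (monotone_sub_bernoulliCGF hp).ge_of_tendsto
    (by simpa using (tendsto_bernoulliCGF_sub_atTop hp).neg) v
  nlinarith [hx.1, hx.2]

end Bernoulli

def mixCGF (u p q v : ℝ) : ℝ := u * bernoulliCGF p v + (1 - u) * bernoulliCGF q v

def mixTiltedMean (u p q v : ℝ) : ℝ :=
  u * bernoulliTiltedMean p v + (1 - u) * bernoulliTiltedMean q v

theorem I1_eq_legendreTransform (lam mu t u x : ℝ) :
    I1 lam mu t u x = legendreTransform (mixCGF u (p11 lam mu t) (p01 lam mu t)) x :=
  rfl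

section Mixture

variable {u p q : ℝ}

theorem hasDerivAt_mixCGF (hp : p ∈ Ioo (0 : ℝ) 1) (hq : q ∈ Ioo (0 : ℝ) 1) (u v : ℝ) :
    HasDerivAt (mixCGF u p q) (mixTiltedMean u p q v) v :=
  ((hasDerivAt_bernoulliCGF hp v).const_mul u).add
    ((hasDerivAt_bernoulliCGF hq v).const_mul (1 - u))

theorem monotone_mixCGF (hu : u ∈ Icc (0 : ℝ) 1) (hp : p ∈ Ioo (0 : ℝ) 1)
    (hq : q ∈ Ioo (0 : ℝ) 1) : Monotone (mixCGF u p q) :=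
  ((monotone_bernoulliCGF hp).const_mul hu.1).add
    ((monotone_bernoulliCGF hq).const_mul (sub_nonneg.2 hu.2))

theorem monotone_sub_mixCGF (hu : u ∈ Icc (0 : ℝ) 1) (hp : p ∈ Ioo (0 : ℝ) 1)
    (hq : q ∈ Ioo (0 : ℝ) 1) : Monotone fun v => v - mixCGF u p q v := by
  have h := ((monotone_sub_bernoulliCGF hp).const_mul hu.1).add
    ((monotone_sub_bernoulliCGF hq).const_mul (sub_nonneg.2 hu.2))
  convert h using 2 with v
  simp only [mixCGF]
  ring

theorem monotone_mixTiltedMean (hu : u ∈ Icc (0 : ℝ) 1) (hp : p ∈ Ioo (0 : ℝ) 1)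
    (hq : q ∈ Ioo (0 : ℝ) 1) : Monotone (mixTiltedMean u p q) :=
  ((monotone_bernoulliTiltedMean hp).const_mul hu.1).add
    ((monotone_bernoulliTiltedMean hq).const_mul (sub_nonneg.2 hu.2))

theorem tendsto_mixTiltedMean_atBot (hp : p ∈ Ioo (0 : ℝ) 1) (hq : q ∈ Ioo (0 : ℝ) 1)
    (u : ℝ) :
    Tendsto (mixTiltedMean u p q) atBot (𝓝 0) := by
  have h := ((tendsto_bernoulliTiltedMean_atBot hp).const_mul u).add
    ((tendsto_bernoulliTiltedMean_atBot hq).const_mul (1 - u))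
  rwa [mul_zero, mul_zero, add_zero] at h

theorem tendsto_mixTiltedMean_atTop (hp : p ∈ Ioo (0 : ℝ) 1) (hq : q ∈ Ioo (0 : ℝ) 1)
    (u : ℝ) :
    Tendsto (mixTiltedMean u p q) atTop (𝓝 1) := by
  have h := ((tendsto_bernoulliTiltedMean_atTop hp).const_mul u).add
    ((tendsto_bernoulliTiltedMean_atTop hq).const_mul (1 - u))
  rwa [mul_one, mul_one, add_sub_cancel] at h

theorem mixTiltedMean_mem_Icc (hu : u ∈ Icc (0 : ℝ) 1) (hp : p ∈ Ioo (0 : ℝ) 1)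
    (hq : q ∈ Ioo (0 : ℝ) 1) (v : ℝ) : mixTiltedMean u p q v ∈ Icc (0 : ℝ) 1 :=
  ⟨(monotone_mixTiltedMean hu hp hq).le_of_tendsto (tendsto_mixTiltedMean_atBot hp hq u) v,
    (monotone_mixTiltedMean hu hp hq).ge_of_tendsto (tendsto_mixTiltedMean_atTop hp hq u) v⟩

theorem Ioo_subset_range_mixTiltedMean (hp : p ∈ Ioo (0 : ℝ) 1) (hq : q ∈ Ioo (0 : ℝ) 1)
    (u : ℝ) : Ioo 0 1 ⊆ range (mixTiltedMean u p q) := fun _ hx =>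
  mem_range_of_exists_le_of_exists_ge
    ((continuous_const.mul (continuous_bernoulliTiltedMean hp)).add
      (continuous_const.mul (continuous_bernoulliTiltedMean hq)))
    ((tendsto_mixTiltedMean_atBot hp hq u).eventually_le_const hx.1).exists
    ((tendsto_mixTiltedMean_atTop hp hq u).eventually_const_le hx.2).exists

theorem bddAbove_range_mul_sub_mixCGF (hu : u ∈ Icc (0 : ℝ) 1) (hp : p ∈ Ioo (0 : ℝ) 1)
    (hq : q ∈ Ioo (0 : ℝ) 1) {x : ℝ} (hx : x ∈ Icc (0 : ℝ) 1) :
    BddAbove (range fun v => v * x - mixCGF u p q v) := by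
  refine ⟨u * -(x * log p + (1 - x) * log (1 - p)) +
    (1 - u) * -(x * log q + (1 - x) * log (1 - q)), ?_⟩
  rintro _ ⟨v, rfl⟩
  have hp' := mul_le_mul_of_nonneg_left (mul_sub_bernoulliCGF_le hp hx v) hu.1
  have hq' := mul_le_mul_of_nonneg_left (mul_sub_bernoulliCGF_le hq hx v) (sub_nonneg.2 hu.2)
  simp only [mixCGF]
  linarith

theorem strictConvexOn_legendreTransform_mixCGF (hu : u ∈ Icc (0 : ℝ) 1)
    (hp : p ∈ Ioo (0 : ℝ) 1) (hq : q ∈ Ioo (0 : ℝ) 1) :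
    StrictConvexOn ℝ (Icc 0 1) (legendreTransform (mixCGF u p q)) :=
  strictConvexOn_legendreTransform (hasDerivAt_mixCGF hp hq u) (monotone_mixTiltedMean hu hp hq)
    (Ioo_subset_range_mixTiltedMean hp hq u) fun _ hx => bddAbove_range_mul_sub_mixCGF hu hp hq hx

theorem convexOn_legendreTransform_mixCGF_weight (hp : p ∈ Ioo (0 : ℝ) 1)
    (hq : q ∈ Ioo (0 : ℝ) 1) {x : ℝ} (hx : x ∈ Icc (0 : ℝ) 1) :
    ConvexOn ℝ (Icc 0 1) fun s => legendreTransform (mixCGF s p q) x := by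
  refine ⟨convex_Icc 0 1, fun s hs s' hs' a b ha hb hab => ciSup_le fun v => ?_⟩
  have h := le_ciSup (bddAbove_range_mul_sub_mixCGF hs hp hq hx) v
  have h' := le_ciSup (bddAbove_range_mul_sub_mixCGF hs' hp hq hx) v
  calc v * x - mixCGF (a • s + b • s') p q v
      = a * (v * x - mixCGF s p q v) + b * (v * x - mixCGF s' p q v) := by
        simp only [mixCGF, smul_eq_mul]; linear_combination (bernoulliCGF q v - v * x) * hab
    _ ≤ a • legendreTransform (mixCGF s p q) x + b • legendreTransform (mixCGF s' p q) x := by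
        simp only [smul_eq_mul]
        exact add_le_add (mul_le_mul_of_nonneg_left h ha) (mul_le_mul_of_nonneg_left h' hb)

end Mixture

section TwoStep

variable {u p q P' Q' r : ℝ}

theorem add_mul_one_sub_mul_mem_Ioo (hp : p ∈ Icc (0 : ℝ) 1) (hP' : P' ∈ Ioo (0 : ℝ) 1)
    (hQ' : Q' ∈ Ioo (0 : ℝ) 1) : p * P' + (1 - p) * Q' ∈ Ioo (0 : ℝ) 1 :=
  convex_Ioo 0 1 hP' hQ' hp.1 (sub_nonneg.2 hp.2) (add_sub_cancel p 1)

theorem bernoulliCGF_comp (hp : p ∈ Ioo (0 : ℝ) 1) (hP' : P' ∈ Ioo (0 : ℝ) 1)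
    (hQ' : Q' ∈ Ioo (0 : ℝ) 1) (v : ℝ) :
    bernoulliCGF (p * P' + (1 - p) * Q') v =
      bernoulliCGF p (bernoulliCGF P' v - bernoulliCGF Q' v) + bernoulliCGF Q' v := by
  have hA := one_sub_add_exp_mul_pos hP' v
  have hB := one_sub_add_exp_mul_pos hQ' v
  have hE : exp (bernoulliCGF P' v - bernoulliCGF Q' v) =
      (1 - P' + exp v * P') / (1 - Q' + exp v * Q') := by
    rw [exp_sub, bernoulliCGF, bernoulliCGF, exp_log hA, exp_log hB]
  have hC := one_sub_add_exp_mul_pos hp (bernoulliCGF P' v - bernoulliCGF Q' v)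
  rw [hE] at hC
  change _ = log (1 - p + exp (bernoulliCGF P' v - bernoulliCGF Q' v) * p) +
    log (1 - Q' + exp v * Q')
  rw [hE, ← log_mul hC.ne' hB.ne', bernoulliCGF]
  congr 1
  rw [add_mul, mul_right_comm, div_mul_cancel₀ _ hB.ne']
  ring

theorem mixCGF_comp (hp : p ∈ Ioo (0 : ℝ) 1) (hq : q ∈ Ioo (0 : ℝ) 1)
    (hP' : P' ∈ Ioo (0 : ℝ) 1) (hQ' : Q' ∈ Ioo (0 : ℝ) 1) (u v : ℝ) :
    mixCGF u (p * P' + (1 - p) * Q') (q * P' + (1 - q) * Q') v =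
      mixCGF u p q (bernoulliCGF P' v - bernoulliCGF Q' v) + bernoulliCGF Q' v := by
  simp only [mixCGF, bernoulliCGF_comp hp hP' hQ', bernoulliCGF_comp hq hP' hQ']
  ring

theorem mixTiltedMean_comp (hp : p ∈ Ioo (0 : ℝ) 1) (hq : q ∈ Ioo (0 : ℝ) 1)
    (hP' : P' ∈ Ioo (0 : ℝ) 1) (hQ' : Q' ∈ Ioo (0 : ℝ) 1) (u v : ℝ) :
    mixTiltedMean u (p * P' + (1 - p) * Q') (q * P' + (1 - q) * Q') v =
      mixTiltedMean (mixTiltedMean u p q (bernoulliCGF P' v - bernoulliCGF Q' v)) P' Q' v := by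
  have hw := (hasDerivAt_bernoulliCGF hP' v).sub (hasDerivAt_bernoulliCGF hQ' v)
  have h := (((hasDerivAt_mixCGF hp hq u _).comp v hw).add
    (hasDerivAt_bernoulliCGF hQ' v)).congr_of_eventuallyEq
      (Eventually.of_forall (mixCGF_comp hp hq hP' hQ' u))
  have hP := add_mul_one_sub_mul_mem_Ioo (Ioo_subset_Icc_self hp) hP' hQ'
  have hQ := add_mul_one_sub_mul_mem_Ioo (Ioo_subset_Icc_self hq) hP' hQ'
  rw [(hasDerivAt_mixCGF hP hQ u v).unique h]
  simp only [mixTiltedMean, Pi.sub_apply]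
  ring

theorem mul_sub_mixCGF_comp (hp : p ∈ Ioo (0 : ℝ) 1) (hq : q ∈ Ioo (0 : ℝ) 1)
    (hP' : P' ∈ Ioo (0 : ℝ) 1) (hQ' : Q' ∈ Ioo (0 : ℝ) 1) (u r s v : ℝ) :
    v * r - mixCGF u (p * P' + (1 - p) * Q') (q * P' + (1 - q) * Q') v =
      ((bernoulliCGF P' v - bernoulliCGF Q' v) * s -
          mixCGF u p q (bernoulliCGF P' v - bernoulliCGF Q' v)) +
        (v * r - mixCGF s P' Q' v) := by
  rw [mixCGF_comp hp hq hP' hQ']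
  simp only [mixCGF]
  ring

theorem legendreTransform_comp_le_add (hu : u ∈ Icc (0 : ℝ) 1) (hp : p ∈ Ioo (0 : ℝ) 1)
    (hq : q ∈ Ioo (0 : ℝ) 1) (hP' : P' ∈ Ioo (0 : ℝ) 1) (hQ' : Q' ∈ Ioo (0 : ℝ) 1)
    (hr : r ∈ Icc (0 : ℝ) 1) {s : ℝ} (hs : s ∈ Icc (0 : ℝ) 1) :
    legendreTransform (mixCGF u (p * P' + (1 - p) * Q') (q * P' + (1 - q) * Q')) r ≤
      legendreTransform (mixCGF u p q) s + legendreTransform (mixCGF s P' Q') r :=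
  ciSup_le fun v => by
    rw [mul_sub_mixCGF_comp hp hq hP' hQ' u r s v]
    exact add_le_add (le_ciSup (bddAbove_range_mul_sub_mixCGF hu hp hq hs) _)
      (le_ciSup (bddAbove_range_mul_sub_mixCGF hs hP' hQ' hr) v)

theorem add_legendreTransform_le_of_tendsto {l : Filter ℝ} [l.NeBot] {ω : ℝ}
    (hu : u ∈ Icc (0 : ℝ) 1) (hp : p ∈ Ioo (0 : ℝ) 1) (hq : q ∈ Ioo (0 : ℝ) 1)
    (hP' : P' ∈ Ioo (0 : ℝ) 1) (hQ' : Q' ∈ Ioo (0 : ℝ) 1) (hr : r ∈ Icc (0 : ℝ) 1)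
    (hw : Tendsto (fun v => bernoulliCGF P' v - bernoulliCGF Q' v) l (𝓝 ω))
    (hlim : Tendsto (fun v => v * r - mixCGF (mixTiltedMean u p q ω) P' Q' v) l
      (𝓝 (legendreTransform (mixCGF (mixTiltedMean u p q ω) P' Q') r))) :
    legendreTransform (mixCGF u p q) (mixTiltedMean u p q ω) +
        legendreTransform (mixCGF (mixTiltedMean u p q ω) P' Q') r ≤
      legendreTransform (mixCGF u (p * P' + (1 - p) * Q') (q * P' + (1 - q) * Q')) r := by
  set s := mixTiltedMean u p q ω
  have hfirst : Tendsto (fun v => (bernoulliCGF P' v - bernoulliCGF Q' v) * s -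
      mixCGF u p q (bernoulliCGF P' v - bernoulliCGF Q' v)) l
        (𝓝 (legendreTransform (mixCGF u p q) s)) := by
    rw [legendreTransform_eq_of_hasDerivAt (hasDerivAt_mixCGF hp hq u)
      (monotone_mixTiltedMean hu hp hq) rfl]
    exact ((continuousAt_id.mul continuousAt_const).sub
      (hasDerivAt_mixCGF hp hq u ω).continuousAt).tendsto.comp hw
  have hP := add_mul_one_sub_mul_mem_Ioo (Ioo_subset_Icc_self hp) hP' hQ'
  have hQ := add_mul_one_sub_mul_mem_Ioo (Ioo_subset_Icc_self hq) hP' hQ'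
  have hsum := (hfirst.add hlim).congr fun v => (mul_sub_mixCGF_comp hp hq hP' hQ' u r s v).symm
  exact le_of_tendsto' hsum fun v => le_ciSup (bddAbove_range_mul_sub_mixCGF hu hP hQ hr) v

theorem exists_add_legendreTransform_le (hu : u ∈ Icc (0 : ℝ) 1) (hp : p ∈ Ioo (0 : ℝ) 1)
    (hq : q ∈ Ioo (0 : ℝ) 1) (hP' : P' ∈ Ioo (0 : ℝ) 1) (hQ' : Q' ∈ Ioo (0 : ℝ) 1)
    (hr : r ∈ Icc (0 : ℝ) 1) :
    ∃ s ∈ Icc (0 : ℝ) 1,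
      legendreTransform (mixCGF u p q) s + legendreTransform (mixCGF s P' Q') r ≤
      legendreTransform (mixCGF u (p * P' + (1 - p) * Q') (q * P' + (1 - q) * Q')) r := by
  have hs := mixTiltedMean_mem_Icc hu hp hq
  suffices ∃ ω, legendreTransform (mixCGF u p q) (mixTiltedMean u p q ω) +
      legendreTransform (mixCGF (mixTiltedMean u p q ω) P' Q') r ≤
        legendreTransform (mixCGF u (p * P' + (1 - p) * Q') (q * P' + (1 - q) * Q')) r by
    obtain ⟨ω, h⟩ := this
    exact ⟨_, hs ω, h⟩
  rcases hr.1.eq_or_lt with rfl | hr0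
  · exact ⟨_, add_legendreTransform_le_of_tendsto hu hp hq hP' hQ' hr
      ((tendsto_bernoulliCGF_atBot hP').sub (tendsto_bernoulliCGF_atBot hQ'))
      (tendsto_atBot_legendreTransform_zero (monotone_mixCGF (hs _) hP' hQ')
        (bddAbove_range_mul_sub_mixCGF (hs _) hP' hQ' hr))⟩
  rcases hr.2.eq_or_lt with rfl | hr1
  · exact ⟨_, add_legendreTransform_le_of_tendsto hu hp hq hP' hQ' hr
      (((tendsto_bernoulliCGF_sub_atTop hP').sub (tendsto_bernoulliCGF_sub_atTop hQ')).congr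
        fun v => by ring)
      (tendsto_atTop_legendreTransform_one (monotone_sub_mixCGF (hs _) hP' hQ')
        (bddAbove_range_mul_sub_mixCGF (hs _) hP' hQ' hr))⟩
  have hP := add_mul_one_sub_mul_mem_Ioo (Ioo_subset_Icc_self hp) hP' hQ'
  have hQ := add_mul_one_sub_mul_mem_Ioo (Ioo_subset_Icc_self hq) hP' hQ'
  obtain ⟨v, hv⟩ := Ioo_subset_range_mixTiltedMean hP hQ u ⟨hr0, hr1⟩
  refine ⟨_, add_legendreTransform_le_of_tendsto (l := pure v) hu hp hq hP' hQ' hr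
    (tendsto_pure_nhds _ v) ?_⟩
  rw [legendreTransform_eq_of_hasDerivAt (hasDerivAt_mixCGF hP' hQ' _)
    (monotone_mixTiltedMean (hs _) hP' hQ') ((mixTiltedMean_comp hp hq hP' hQ' u v).symm.trans hv)]
  exact tendsto_pure_nhds _ v

theorem exists_legendreTransform_split (hu : u ∈ Icc (0 : ℝ) 1) (hp : p ∈ Ioo (0 : ℝ) 1)
    (hq : q ∈ Ioo (0 : ℝ) 1) (hP' : P' ∈ Ioo (0 : ℝ) 1) (hQ' : Q' ∈ Ioo (0 : ℝ) 1)
    (hr : r ∈ Icc (0 : ℝ) 1) :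
    ∃ s₀ : ℝ, s₀ ∈ Icc (0 : ℝ) 1 ∧
      legendreTransform (mixCGF u p q) s₀ + legendreTransform (mixCGF s₀ P' Q') r =
        legendreTransform (mixCGF u (p * P' + (1 - p) * Q') (q * P' + (1 - q) * Q')) r ∧
      ∀ s ∈ Icc (0 : ℝ) 1, s ≠ s₀ →
        legendreTransform (mixCGF u (p * P' + (1 - p) * Q') (q * P' + (1 - q) * Q')) r <
          legendreTransform (mixCGF u p q) s + legendreTransform (mixCGF s P' Q') r := by
  have hle := fun s (hs : s ∈ Icc (0 : ℝ) 1) =>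
    legendreTransform_comp_le_add hu hp hq hP' hQ' hr hs
  obtain ⟨s₀, hs₀, hge⟩ := exists_add_legendreTransform_le hu hp hq hP' hQ' hr
  have heq := le_antisymm hge (hle s₀ hs₀)
  have hconv := (strictConvexOn_legendreTransform_mixCGF hu hp hq).add_convexOn
    (convexOn_legendreTransform_mixCGF_weight hP' hQ' hr)
  refine ⟨s₀, hs₀, heq, fun s hs hne => (hle s hs).lt_of_ne fun h => hne ?_⟩
  exact hconv.eq_of_isMinOn (fun y hy => h.symm.le.trans (hle y hy))
    (fun y hy => heq.le.trans (hle y hy)) hs hs₀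

end TwoStep

section TwoStateChain

variable {lam mu : ℝ}

theorem p01_mem_Ioo (hlam : 0 < lam) (hmu : 0 < mu) {t : ℝ} (ht : 0 < t) :
    p01 lam mu t ∈ Ioo (0 : ℝ) 1 := by
  have hE : exp (-(t * (lam + mu))) < 1 := exp_lt_one_iff.2 (by nlinarith)
  rw [p01, mem_Ioo, div_pos_iff_of_pos_right (by linarith), div_lt_one (by linarith)]
  constructor <;> nlinarith [exp_pos (-(t * (lam + mu)))]

theorem p11_mem_Ioo (hlam : 0 < lam) (hmu : 0 < mu) {t : ℝ} (ht : 0 < t) :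
    p11 lam mu t ∈ Ioo (0 : ℝ) 1 := by
  have hE : exp (-(t * (lam + mu))) < 1 := exp_lt_one_iff.2 (by nlinarith)
  rw [p11, mem_Ioo, div_pos_iff_of_pos_right (by linarith), div_lt_one (by linarith)]
  constructor <;> nlinarith [exp_pos (-(t * (lam + mu)))]

theorem exp_neg_add_mul (t τ c : ℝ) :
    exp (-((t + τ) * c)) = exp (-(t * c)) * exp (-(τ * c)) := by
  rw [← exp_add]; ring_nf

theorem p11_add (h : lam + mu ≠ 0) (t τ : ℝ) :
    p11 lam mu (t + τ) = p11 lam mu t * p11 lam mu τ + (1 - p11 lam mu t) * p01 lam mu τ := by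
  simp only [p11, p01, exp_neg_add_mul]
  field_simp
  ring

theorem p01_add (h : lam + mu ≠ 0) (t τ : ℝ) :
    p01 lam mu (t + τ) = p01 lam mu t * p11 lam mu τ + (1 - p01 lam mu t) * p01 lam mu τ := by
  simp only [p11, p01, exp_neg_add_mul]
  field_simp
  ring

end TwoStateChain

/-- Uniqueness of the optimal midpoint in the two-step representation of the rate function. -/
theorem stmt_8 (lam mu t T : ℝ) (hlam : 0 < lam) (hmu : 0 < mu) (ht : 0 < t) (htT : t < T)
    (u r : ℝ) (hu : u ∈ Set.Icc (0:ℝ) 1) (hr : r ∈ Set.Icc (0:ℝ) 1) :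
    ∃ sstar : ℝ, sstar ∈ Set.Icc (0:ℝ) 1 ∧
      I1 lam mu t u sstar + I1 lam mu (T - t) sstar r = I1 lam mu T u r ∧
      ∀ s ∈ Set.Icc (0:ℝ) 1, s ≠ sstar →
        I1 lam mu T u r < I1 lam mu t u s + I1 lam mu (T - t) s r := by
  have hsum : lam + mu ≠ 0 := by positivity
  have hτ : 0 < T - t := sub_pos.2 htT
  have h11 := p11_add hsum t (T - t)
  have h01 := p01_add hsum t (T - t)
  rw [add_sub_cancel] at h11 h01
  simp only [I1_eq_legendreTransform, h11, h01]
  exact exists_legendreTransform_split hu (p11_mem_Ioo hlam hmu ht) (p01_mem_Ioo hlam hmu ht)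
    (p11_mem_Ioo hlam hmu hτ) (p01_mem_Ioo hlam hmu hτ) hr
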